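/- Let τ > 0 and let ρ_e^s, ρ_e^b, ρ_r^↑, ρ_r^↓ be real numbers. If the function g : ℝ³ → ℝ defined by g(p, r↑, r↓) = −ρ_e^s·τ·max(p, 0) + ρ_e^b·τ·max(−p, 0) − ρ_r^↑·τ·r↑ − ρ_r^↓·τ·r↓ is convex on ℝ³, then ρ_e^b ≥ ρ_e^s. -/
import Mathlib


/-- Converse direction of Proposition 1: if the aggregator trading/reserve cost `g`
is convex on `ℝ³`, then the buying price is at least the selling price. -/
theorem buying_ge_selling_of_convex_aggregator_cost
    (τ ρes ρeb ρru ρrd : ℝ) (hτ : 0 < τ)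
    (hconv : ConvexOn ℝ (Set.univ : Set (ℝ × ℝ × ℝ))
      (fun z : ℝ × ℝ × ℝ =>
        -ρes * τ * max z.1 0 + ρeb * τ * max (-z.1) 0
          - ρru * τ * z.2.1 - ρrd * τ * z.2.2)) :
    ρeb ≥ ρes := by
  have h := hconv.2 (Set.mem_univ ((1 : ℝ), (0 : ℝ), (0 : ℝ)))
    (Set.mem_univ ((-1 : ℝ), (0 : ℝ), (0 : ℝ)))
    (by norm_num : (0:ℝ) ≤ 1/2) (by norm_num : (0:ℝ) ≤ 1/2) (by norm_num : (1:ℝ)/2 + 1/2 = 1)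
  simp only [Prod.smul_mk, smul_eq_mul, Prod.mk_add_mk] at h
  norm_num at h
  nlinarith
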